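/- The pointed Weihrauch degrees are dense: for all problems h, f with id ≤_W h and h <_W f, there exists a problem g with h <_W g <_W f. -/

import Mathlib

namespace WeihrauchPaper

/-- Baire space ℕ^ℕ. -/
abbrev Baire : Type := ℕ → ℕ

/-- Prepend a natural number to an element of Baire space: `(cons e q) 0 = e`, `(cons e q) (n+1) = q n`. -/
def cons (e : ℕ) (q : Baire) : Baire
  | 0 => e
  | n + 1 => q n

/-- Pairing of two elements of Baire space by interleaving. -/
def pair (p q : Baire) : Baire := fun n => if n % 2 = 0 then p (n / 2) else q (n / 2)

def left (x : Baire) : Baire := fun n => x (2 * n)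
def right (x : Baire) : Baire := fun n => x (2 * n + 1)

/-- The finite initial segment of `p` of length `k`. -/
def pref (p : Baire) (k : ℕ) : List ℕ := List.ofFn fun i : Fin k => p i

/-- Result of running the `e`-th partial computable function on the pair
(code of the length-`k` prefix of `p`, input `n`). -/
def query (e : ℕ) (p : Baire) (k n : ℕ) : Part ℕ :=
  Nat.Partrec.Code.eval (Denumerable.ofNat Nat.Partrec.Code e)
    (Nat.pair (Encodable.encode (pref p k)) n)

/-- `FEval e p q` : the `e`-th partial computable functional on Baire space, applied to `p`,
is defined and equals `q`.  The value at `n` is obtained from the least prefix length `k`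
on which the computation converges, which makes the functional single-valued. -/
def FEval (e : ℕ) (p q : Baire) : Prop :=
  ∀ n, ∃ k, query e p k n = Part.some (q n) ∧ ∀ k' < k, ¬ (query e p k' n).Dom

/-- Turing reducibility on Baire space: `q ≤_T p` iff `q = Φ_e(p)` for some `e`. -/
def TuringLE (q p : Baire) : Prop := ∃ e, FEval e p q

/-- Medvedev reducibility: `A ≤_M B` iff some partial computable functional is defined on all
of `B` and maps `B` into `A`. -/
def MedLE (A B : Set Baire) : Prop := ∃ e, ∀ q ∈ B, ∃ p, FEval e q p ∧ p ∈ A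

def MedEquiv (A B : Set Baire) : Prop := MedLE A B ∧ MedLE B A

def MedLT (A B : Set Baire) : Prop := MedLE A B ∧ ¬ MedLE B A

/-- The meet `P ∧ Q := 0⌢P ∪ 1⌢Q` in the Medvedev degrees. -/
def medMeet (P Q : Set Baire) : Set Baire := (cons 0 '' P) ∪ (cons 1 '' Q)

/-- `Succ p = { e⌢q : Φ_e(q) = p and q ≰_T p }`. -/
def Succ (p : Baire) : Set Baire :=
  {x | ∃ e q, x = cons e q ∧ FEval e q p ∧ ¬ TuringLE q p}

/-- A problem (partial multi-valued function on Baire space), represented as the map sending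
an instance to its (possibly empty) set of solutions. -/
abbrev Problem : Type := Baire → Set Baire

/-- The domain of a problem: the instances having at least one solution. -/
def dom (f : Problem) : Set Baire := {x | (f x).Nonempty}

/-- Weihrauch reducibility `f ≤_W g`. -/
def WLE (f g : Problem) : Prop :=
  ∃ eΦ eΨ, ∀ p ∈ dom f, ∃ p', FEval eΦ p p' ∧ p' ∈ dom g ∧
    ∀ q ∈ g p', ∃ r, FEval eΨ (pair p q) r ∧ r ∈ f p

def WEquiv (f g : Problem) : Prop := WLE f g ∧ WLE g f

def WLT (f g : Problem) : Prop := WLE f g ∧ ¬ WLE g f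

/-- The identity on Baire space, as a problem. -/
def idB : Problem := fun p => {p}

/-- The restriction of the identity to `X ⊆ ℕ^ℕ`, as a problem. -/
def idRestrict (X : Set Baire) : Problem := fun p => {q | p ∈ X ∧ q = p}

/-- The join `f ⊔ g`, with domain `{0}×dom f ∪ {1}×dom g` (coded via `cons`). -/
def join (f g : Problem) : Problem := fun x =>
  if x 0 = 0 then f (fun n => x (n + 1))
  else if x 0 = 1 then g (fun n => x (n + 1))
  else ∅

/-- The meet `f ⊓ g`, with domain `dom f × dom g` (coded via `pair`) and
`(f ⊓ g)(x,z) = {0}×f(x) ∪ {1}×g(z)` (coded via `cons`). -/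
def meet (f g : Problem) : Problem := fun x =>
  {y | left x ∈ dom f ∧ right x ∈ dom g ∧
    ((∃ z ∈ f (left x), y = cons 0 z) ∨ (∃ z ∈ g (right x), y = cons 1 z))}

/-- The constant sequence with value `n`. -/
def const (n : ℕ) : Baire := fun _ => n

/-- The characteristic function of `D ⊆ ℕ` as a problem: defined on the constant sequences,
with `χ_D(n)` the constantly-1 sequence if `n ∈ D` and the constantly-0 sequence otherwise. -/
def chi (D : Set ℕ) : Problem := fun x =>
  {y | ∃ n, x = const n ∧ ((n ∈ D ∧ y = const 1) ∨ (n ∉ D ∧ y = const 0))}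

/-- The set of non-computable elements of Baire space. -/
def NR : Set Baire := {q | ¬ Computable q}

/-- `f` is a minimal cover of `h` in the Weihrauch degrees. -/
def MinimalCover (f h : Problem) : Prop :=
  WLT h f ∧ ¬ ∃ g, WLT h g ∧ WLT g f

/-- `f` is a strong minimal cover of `h` in the Weihrauch degrees. -/
def StrongMinimalCover (f h : Problem) : Prop :=
  WLT h f ∧ ∀ g, WLT g f → WLE g h



/- ===================== auxiliary development ===================== -/

section Density

open Nat.Partrec Nat.Partrec.Code Encodable

/-- tail of a Baire point -/
def tl (x : Baire) : Baire := fun n => x (n + 1)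

lemma pref_length (p : Baire) (k : ℕ) : (pref p k).length = k := by
  simp [pref]

lemma pref_get? (p : Baire) (k n : ℕ) :
    (pref p k)[n]? = if n < k then some (p n) else none := by
  by_cases h : n < k
  · simp [pref, List.getElem?_ofFn, h]
  · simp [pref, List.getElem?_ofFn, h]

lemma pref_getD (p : Baire) {k i : ℕ} (h : i < k) : (pref p k).getD i 0 = p i := by
  simp [List.getD, List.getD_eq_getElem?_getD, pref, h]

lemma query_def' (e : ℕ) (p : Baire) (k n : ℕ) :
    query e p k n = (Denumerable.ofNat Nat.Partrec.Code e).eval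
      (Nat.pair (encode (pref p k)) n) := rfl

/-- functionals are single valued -/
lemma FEval_unique {e : ℕ} {p q q' : Baire} (h1 : FEval e p q) (h2 : FEval e p q') :
    q = q' := by
  funext n
  obtain ⟨k1, hv1, hd1⟩ := h1 n
  obtain ⟨k2, hv2, hd2⟩ := h2 n
  have hk : k1 = k2 := by
    rcases lt_trichotomy k1 k2 with h | h | h
    · exact absurd (by rw [hv1]; trivial) (hd2 _ h)
    · exact h
    · exact absurd (by rw [hv2]; trivial) (hd1 _ h)
  subst hk
  exact Part.some_inj.mp (hv1.symm.trans hv2)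

/-- fundamental code-construction lemma -/
lemma codeQuery {F : List ℕ → ℕ → Part ℕ} (hF : Partrec₂ F) :
    ∃ e : ℕ, ∀ p k n, query e p k n = F (pref p k) n := by
  have h1 : Computable fun m : ℕ => (Encodable.decode (α := List ℕ) m.unpair.1) :=
    Computable.decode.comp (Computable.fst.comp Computable.unpair)
  have hdec : Computable fun m : ℕ => ((Encodable.decode (α := List ℕ) m.unpair.1).getD []) :=
    Computable.option_getD h1 (Computable.const [])
  have hsnd : Computable fun m : ℕ => m.unpair.2 :=
    Computable.snd.comp Computable.unpair
  have hf : Partrec fun m : ℕ =>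
      F ((Encodable.decode (α := List ℕ) m.unpair.1).getD []) m.unpair.2 :=
    hF.comp hdec hsnd
  replace hf := Partrec.nat_iff.mp hf
  obtain ⟨c, hc⟩ := Nat.Partrec.Code.exists_code.mp hf
  refine ⟨encode c, fun p k n => ?_⟩
  rw [query_def', Denumerable.ofNat_encode, hc]
  simp [Encodable.encodek]

/-- the identity code -/
lemma exists_idCode : ∃ e, ∀ x : Baire, FEval e x x := by
  have hF : Partrec₂ fun (L : List ℕ) (n : ℕ) => (Part.ofOption (L[n]?)) := by
    have : Partrec fun p : List ℕ × ℕ => (Part.ofOption (p.1[p.2]?)) :=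
      Computable.ofOption (Computable.list_getElem?.comp Computable.fst Computable.snd)
    exact this
  obtain ⟨e, he⟩ := codeQuery hF
  refine ⟨e, fun x n => ⟨n + 1, ?_, fun k hk => ?_⟩⟩
  · rw [he, pref_get?, if_pos (Nat.lt_succ_self n)]
    rfl
  · rw [he, pref_get?, if_neg (by omega)]
    simp [Part.ofOption]


lemma pref_eq_range_map (q : Baire) (m : ℕ) : pref q m = (List.range m).map q := by
  rw [pref]
  apply List.ext_getElem (by simp) (fun i h1 h2 => by simp)

/-- index-rearrangement of a Baire point -/
def Rt (τ : ℕ → ℕ ⊕ ℕ) (x : Baire) : Baire := fun i => Sum.elim x id (τ i)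

def Rhat (τ : ℕ → ℕ ⊕ ℕ) (L : List ℕ) : List ℕ :=
  (List.range (L.length - 3)).map fun i => Sum.elim (fun j => L.getD j 0) id (τ i)

lemma Rhat_pref {τ : ℕ → ℕ ⊕ ℕ} (hb : ∀ i j, τ i = Sum.inl j → j ≤ i + 2)
    (x : Baire) (k : ℕ) : Rhat τ (pref x k) = pref (Rt τ x) (k - 3) := by
  rw [Rhat, pref_length, pref_eq_range_map (Rt τ x) (k - 3)]
  apply List.map_congr_left
  intro i hi
  rw [List.mem_range] at hi
  rcases hτ : τ i with j | v
  · have hj : j ≤ i + 2 := hb i j hτ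
    have hjk : j < k := by omega
    simp only [Rt, hτ, Sum.elim_inl]
    exact pref_getD x hjk
  · simp only [Rt, hτ, Sum.elim_inr, id]

/-- the fundamental single-call combinator, with branching on the first input value -/
lemma comb1 (e₀ e₁ : ℕ) (τ₀ τ₁ : ℕ → ℕ ⊕ ℕ) (σ₀ σ₁ : ℕ → ℕ) (g₀ g₁ : ℕ → ℕ → ℕ)
    (hτ₀p : Primrec τ₀) (hτ₁p : Primrec τ₁) (hσ₀ : Primrec σ₀) (hσ₁ : Primrec σ₁)
    (hg₀ : Primrec₂ g₀) (hg₁ : Primrec₂ g₁)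
    (hb₀ : ∀ i j, τ₀ i = Sum.inl j → j ≤ i + 2)
    (hb₁ : ∀ i j, τ₁ i = Sum.inl j → j ≤ i + 2) :
    ∃ e, ∀ x : Baire,
      (x 0 = 0 → ∀ q, FEval e₀ (Rt τ₀ x) q → FEval e x fun n => g₀ n (q (σ₀ n))) ∧
      (x 0 ≠ 0 → ∀ q, FEval e₁ (Rt τ₁ x) q → FEval e x fun n => g₁ n (q (σ₁ n))) := by
  classical
  set c₀ := Denumerable.ofNat Nat.Partrec.Code e₀ with hc₀
  set c₁ := Denumerable.ofNat Nat.Partrec.Code e₁ with hc₁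
  set F : List ℕ → ℕ → Part ℕ := fun L n =>
    bif decide (L.length = 0) then Part.none else
    bif decide (L.getD 0 0 = 0)
    then (c₀.eval (Nat.pair (encode (Rhat τ₀ L)) (σ₀ n))).map (g₀ n)
    else (c₁.eval (Nat.pair (encode (Rhat τ₁ L)) (σ₁ n))).map (g₁ n) with hF
  -- computability
  have hbranch : ∀ (c : Nat.Partrec.Code) (τ : ℕ → ℕ ⊕ ℕ) (σ : ℕ → ℕ) (g : ℕ → ℕ → ℕ),
      Primrec τ → Primrec σ → Primrec₂ g →
      Partrec fun pr : List ℕ × ℕ =>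
        (c.eval (Nat.pair (encode (Rhat τ pr.1)) (σ pr.2))).map (g pr.2) := by
    intro c τ σ g hτ hσ hg
    have hRhat : Primrec fun L : List ℕ => Rhat τ L := by
      apply Primrec.list_map
        (Primrec.list_range.comp (Primrec.nat_sub.comp Primrec.list_length (Primrec.const 3)))
      exact Primrec.sumCasesOn (hτ.comp Primrec.snd)
        ((Primrec.list_getD 0).comp (Primrec.fst.comp Primrec.fst) Primrec.snd)
        Primrec₂.right
    have hinp : Computable fun pr : List ℕ × ℕ =>
        Nat.pair (encode (Rhat τ pr.1)) (σ pr.2) :=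
      (Primrec₂.natPair.comp (Primrec.encode.comp (hRhat.comp Primrec.fst))
        (hσ.comp Primrec.snd)).to_comp
    have heval : Partrec fun pr : List ℕ × ℕ =>
        c.eval (Nat.pair (encode (Rhat τ pr.1)) (σ pr.2)) :=
      (Nat.Partrec.Code.eval_part.comp (Computable.const c) Computable.id).comp hinp
    exact heval.map ((hg.to_comp).comp (Computable.snd.comp Computable.fst) Computable.snd).to₂
  have hFpr : Partrec₂ F := by
    apply Partrec.cond
      ((Primrec.eq.comp (Primrec.list_length.comp Primrec.fst) (Primrec.const 0)).decide.to_comp)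
      Partrec.none
    apply Partrec.cond
      ((Primrec.eq.comp ((Primrec.list_getD 0).comp Primrec.fst (Primrec.const 0))
        (Primrec.const 0)).decide.to_comp)
      (hbranch c₀ τ₀ σ₀ g₀ hτ₀p hσ₀ hg₀) (hbranch c₁ τ₁ σ₁ g₁ hτ₁p hσ₁ hg₁)
  obtain ⟨e, he⟩ := codeQuery hFpr
  -- key reduction facts
  have hF0 : ∀ x : Baire, ∀ n, F (pref x 0) n = Part.none := by
    intro x n
    rw [hF]
    beta_reduce
    have h0 : pref x 0 = [] := rfl
    rw [h0]
    rfl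
  have hFk0 : ∀ x : Baire, ∀ k n, k ≠ 0 → x 0 = 0 →
      F (pref x k) n = (query e₀ (Rt τ₀ x) (k - 3) (σ₀ n)).map (g₀ n) := by
    intro x k n hk hx
    rw [hF]
    beta_reduce
    have h1 : decide ((pref x k).length = 0) = false := by
      simp [pref_length, hk]
    have h2 : decide ((pref x k).getD 0 0 = 0) = true := by
      rw [pref_getD x (Nat.pos_of_ne_zero hk), hx]
      simp
    rw [h1, cond_false, h2, cond_true, Rhat_pref hb₀, query_def']
  have hFk1 : ∀ x : Baire, ∀ k n, k ≠ 0 → x 0 ≠ 0 →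
      F (pref x k) n = (query e₁ (Rt τ₁ x) (k - 3) (σ₁ n)).map (g₁ n) := by
    intro x k n hk hx
    rw [hF]
    beta_reduce
    have h1 : decide ((pref x k).length = 0) = false := by
      simp [pref_length, hk]
    have h2 : decide ((pref x k).getD 0 0 = 0) = false := by
      rw [pref_getD x (Nat.pos_of_ne_zero hk)]
      simp [hx]
    rw [h1, cond_false, h2, cond_false, Rhat_pref hb₁, query_def']
  refine ⟨e, fun x => ⟨?_, ?_⟩⟩
  · intro hx q hq n
    obtain ⟨k', hv, hd⟩ := hq (σ₀ n)
    by_cases hk' : k' = 0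
    · refine ⟨1, ?_, ?_⟩
      · rw [he, hFk0 x 1 n one_ne_zero hx]
        simp only [Nat.sub_self, show (1:ℕ) - 3 = 0 by rfl]
        rw [← hk', hv]; rfl
      · intro m hm
        interval_cases m
        rw [he, hF0]
        simp
    · refine ⟨k' + 3, ?_, ?_⟩
      · rw [he, hFk0 x (k' + 3) n (by omega) hx]
        simp only [Nat.add_sub_cancel]
        rw [hv]; rfl
      · intro m hm
        rcases Nat.eq_zero_or_pos m with hm0 | hm0
        · subst hm0; rw [he, hF0]; simp
        · rw [he, hFk0 x m n (by omega) hx]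
          exact fun hdom => hd (m - 3) (by omega) hdom
  · intro hx q hq n
    obtain ⟨k', hv, hd⟩ := hq (σ₁ n)
    by_cases hk' : k' = 0
    · refine ⟨1, ?_, ?_⟩
      · rw [he, hFk1 x 1 n one_ne_zero hx]
        simp only [show (1:ℕ) - 3 = 0 by rfl]
        rw [← hk', hv]; rfl
      · intro m hm
        interval_cases m
        rw [he, hF0]
        simp
    · refine ⟨k' + 3, ?_, ?_⟩
      · rw [he, hFk1 x (k' + 3) n (by omega) hx]
        simp only [Nat.add_sub_cancel]
        rw [hv]; rfl
      · intro m hm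
        rcases Nat.eq_zero_or_pos m with hm0 | hm0
        · subst hm0; rw [he, hF0]; simp
        · rw [he, hFk1 x m n (by omega) hx]
          exact fun hdom => hd (m - 3) (by omega) hdom


/-- bounded search for the least index satisfying a Boolean predicate -/
def bFind (pr : ℕ → Bool) (N : ℕ) : Option ℕ :=
  Nat.rec Option.none (fun n IH => IH <|> (bif pr n then some n else Option.none)) N

lemma bFind_zero (pr : ℕ → Bool) : bFind pr 0 = Option.none := rfl

lemma bFind_succ (pr : ℕ → Bool) (N : ℕ) :
    bFind pr (N + 1) = (bFind pr N <|> (bif pr N then some N else Option.none)) := rfl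

lemma bFind_eq_none {pr : ℕ → Bool} {N : ℕ} :
    bFind pr N = Option.none ↔ ∀ j < N, pr j = false := by
  induction N with
  | zero =>
    simp [bFind_zero]
  | succ N ih =>
    rw [bFind_succ]
    constructor
    · intro h
      have h1 : bFind pr N = Option.none := by
        cases hb : bFind pr N with
        | none => rfl
        | some j => rw [hb] at h; exact absurd h (by simp)
      have h2 : pr N = false := by
        rw [h1] at h
        cases hp : pr N with
        | false => rfl
        | true => rw [hp] at h; exact absurd h (by simp)
      intro j hj
      rcases Nat.lt_succ_iff_lt_or_eq.mp hj with hj' | hj'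
      · exact ih.mp h1 j hj'
      · subst hj'; exact h2
    · intro h
      rw [ih.mpr (fun j hj => h j (Nat.lt_succ_of_lt hj)), h N (Nat.lt_succ_self N)]
      rfl

lemma bFind_spec {pr : ℕ → Bool} {N j : ℕ} (h : bFind pr N = some j) :
    j < N ∧ pr j = true ∧ ∀ i < j, pr i = false := by
  induction N with
  | zero => exact absurd h (by rw [bFind_zero]; simp)
  | succ N ih =>
    rw [bFind_succ] at h
    cases hb : bFind pr N with
    | some j' =>
      rw [hb] at h
      simp at h
      subst h
      obtain ⟨h1, h2, h3⟩ := ih hb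
      exact ⟨Nat.lt_succ_of_lt h1, h2, h3⟩
    | none =>
      rw [hb] at h
      cases hp : pr N with
      | false => rw [hp] at h; exact absurd h (by simp)
      | true =>
        rw [hp] at h
        simp at h
        subst h
        exact ⟨Nat.lt_succ_self _, hp, fun i hi => bFind_eq_none.mp hb i hi⟩

lemma bFind_eq_some_of {pr : ℕ → Bool} {N j : ℕ} (hj : j < N) (hp : pr j = true)
    (hmin : ∀ i < j, pr i = false) : bFind pr N = some j := by
  induction N with
  | zero => omega
  | succ N ih =>
    rw [bFind_succ]
    rcases Nat.lt_succ_iff_lt_or_eq.mp hj with h | h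
    · rw [ih h]; rfl
    · subst h
      rw [bFind_eq_none.mpr hmin, hp]
      rfl

lemma bFind_primrec {α : Type} [Primcodable α] {p : α → ℕ → Bool} (hp : Primrec₂ p) :
    Primrec₂ fun a N => bFind (p a) N := by
  have hg : Primrec₂ fun (a : α) (q : ℕ × Option ℕ) =>
      (q.2 <|> (bif p a q.1 then some q.1 else Option.none)) := by
    have h1 : Primrec fun w : α × (ℕ × Option ℕ) => w.2.2 :=
      Primrec.snd.comp Primrec.snd
    have h2 : Primrec fun w : α × (ℕ × Option ℕ) =>
        (bif p w.1 w.2.1 then some w.2.1 else Option.none) :=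
      Primrec.cond (hp.comp Primrec.fst (Primrec.fst.comp Primrec.snd))
        (Primrec.option_some.comp (Primrec.fst.comp Primrec.snd)) (Primrec.const Option.none)
    exact Primrec.option_orElse.comp h1 h2
  exact (Primrec.nat_rec (Primrec.const Option.none) hg).of_eq fun a n => by
    induction n with
    | zero => rfl
    | succ n ih => rw [bFind_succ, ← ih]

/-- truncated list -/
def tk (L : List ℕ) (j : ℕ) : List ℕ := (List.range j).map fun i => L.getD i 0

lemma tk_pref {p : Baire} {K j : ℕ} (h : j ≤ K) : tk (pref p K) j = pref p j := by
  rw [tk, pref_eq_range_map p j]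
  apply List.map_congr_left
  intro i hi
  rw [List.mem_range] at hi
  exact pref_getD p (by omega)

/-- the two-call mux combinator -/
lemma comb2 (e₁ e₂ : ℕ) :
    ∃ e, ∀ (p X A : Baire), FEval e₁ p X → FEval e₂ p A →
      FEval e p fun n => if X 0 = 0 then X (n + 1) else A n := by
  classical
  set c₁ := Denumerable.ofNat Nat.Partrec.Code e₁ with hc₁
  set c₂ := Denumerable.ofNat Nat.Partrec.Code e₂ with hc₂
  set jfB : Nat.Partrec.Code → ℕ → List ℕ → ℕ → Option ℕ := fun c t L s =>
    bFind (fun j => (Nat.Partrec.Code.evaln s c (Nat.pair (encode (tk L j)) t)).isSome)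
      (L.length + 1) with hjfB
  set condP : List ℕ → ℕ → ℕ → Prop := fun L n s =>
    ((jfB c₁ 0 L s).isSome = true) ∧ ((jfB c₁ (n+1) L s).isSome = true) ∧
    ((jfB c₂ n L s).isSome = true) ∧
    ((jfB c₁ 0 L s).getD 0 + (jfB c₁ (n+1) L s).getD 0 + (jfB c₂ n L s).getD 0 = L.length)
    with hcondP
  set val : List ℕ → ℕ → ℕ → ℕ := fun L n s =>
    if (Nat.Partrec.Code.evaln s c₁ (Nat.pair (encode (tk L ((jfB c₁ 0 L s).getD 0))) 0)).getD 0 = 0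
    then (Nat.Partrec.Code.evaln s c₁
      (Nat.pair (encode (tk L ((jfB c₁ (n+1) L s).getD 0))) (n+1))).getD 0
    else (Nat.Partrec.Code.evaln s c₂
      (Nat.pair (encode (tk L ((jfB c₂ n L s).getD 0))) n)).getD 0 with hval
  set F : List ℕ → ℕ → Part ℕ := fun L n =>
    (Nat.rfind fun s => Part.some (decide (condP L n s))).map (val L n) with hF
  -- computability
  have htk : Primrec₂ tk := by
    apply Primrec.list_map (Primrec.list_range.comp Primrec.snd)
    exact (Primrec.list_getD 0).comp (Primrec.fst.comp Primrec.fst) Primrec.snd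
  have hjf : ∀ (c : Nat.Partrec.Code) (tgt : (List ℕ × ℕ) × ℕ → ℕ), Primrec tgt →
      Primrec fun z : (List ℕ × ℕ) × ℕ => jfB c (tgt z) z.1.1 z.2 := by
    intro c tgt htgt
    have hb : Primrec fun w : ((List ℕ × ℕ) × ℕ) × ℕ =>
        ((w.1.2, c), Nat.pair (encode (tk w.1.1.1 w.2)) (tgt w.1)) := by
      refine Primrec.pair (Primrec.pair (Primrec.snd.comp Primrec.fst) (Primrec.const c)) ?_
      refine Primrec₂.natPair.comp ?_ (htgt.comp Primrec.fst)
      exact Primrec.encode.comp (htk.comp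
        (Primrec.fst.comp (Primrec.fst.comp Primrec.fst)) Primrec.snd)
    have hpred : Primrec₂ fun (z : (List ℕ × ℕ) × ℕ) (j : ℕ) =>
        (Nat.Partrec.Code.evaln z.2 c (Nat.pair (encode (tk z.1.1 j)) (tgt z))).isSome :=
      Primrec.option_isSome.comp ((Nat.Partrec.Code.primrec_evaln.comp hb).of_eq fun w => rfl)
    have := (bFind_primrec hpred).comp Primrec.id
      (Primrec.succ.comp (Primrec.list_length.comp (Primrec.fst.comp Primrec.fst)))
    exact this.of_eq fun z => rfl
  have hl1 : Primrec fun z : (List ℕ × ℕ) × ℕ => jfB c₁ 0 z.1.1 z.2 :=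
    hjf c₁ (fun _ => 0) (Primrec.const 0)
  have hl2 : Primrec fun z : (List ℕ × ℕ) × ℕ => jfB c₁ (z.1.2 + 1) z.1.1 z.2 :=
    hjf c₁ (fun z => z.1.2 + 1) (Primrec.succ.comp (Primrec.snd.comp Primrec.fst))
  have hl3 : Primrec fun z : (List ℕ × ℕ) × ℕ => jfB c₂ z.1.2 z.1.1 z.2 :=
    hjf c₂ (fun z => z.1.2) (Primrec.snd.comp Primrec.fst)
  have hcondpr : Primrec fun z : (List ℕ × ℕ) × ℕ => decide (condP z.1.1 z.1.2 z.2) := by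
    have hb1 : PrimrecPred fun z : (List ℕ × ℕ) × ℕ => (jfB c₁ 0 z.1.1 z.2).isSome = true :=
      Primrec.eq.comp (Primrec.option_isSome.comp hl1) (Primrec.const true)
    have hb2 : PrimrecPred fun z : (List ℕ × ℕ) × ℕ =>
        (jfB c₁ (z.1.2+1) z.1.1 z.2).isSome = true :=
      Primrec.eq.comp (Primrec.option_isSome.comp hl2) (Primrec.const true)
    have hb3 : PrimrecPred fun z : (List ℕ × ℕ) × ℕ => (jfB c₂ z.1.2 z.1.1 z.2).isSome = true :=
      Primrec.eq.comp (Primrec.option_isSome.comp hl3) (Primrec.const true)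
    have hb4 : PrimrecPred fun z : (List ℕ × ℕ) × ℕ =>
        (jfB c₁ 0 z.1.1 z.2).getD 0 + (jfB c₁ (z.1.2+1) z.1.1 z.2).getD 0 +
          (jfB c₂ z.1.2 z.1.1 z.2).getD 0 = z.1.1.length := by
      apply Primrec.eq.comp ?_ (Primrec.list_length.comp (Primrec.fst.comp Primrec.fst))
      have g1 := Primrec.option_getD.comp hl1 (Primrec.const 0)
      have g2 := Primrec.option_getD.comp hl2 (Primrec.const 0)
      have g3 := Primrec.option_getD.comp hl3 (Primrec.const 0)
      exact Primrec.nat_add.comp (Primrec.nat_add.comp g1 g2) g3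
    exact (hb1.and (hb2.and (hb3.and hb4))).decide
  have hvalc : Primrec fun z : (List ℕ × ℕ) × ℕ => val z.1.1 z.1.2 z.2 := by
    have hev : ∀ (c : Nat.Partrec.Code) (tgt : (List ℕ × ℕ) × ℕ → ℕ)
        (jl : (List ℕ × ℕ) × ℕ → Option ℕ), Primrec tgt → Primrec jl →
        Primrec fun z : (List ℕ × ℕ) × ℕ =>
          (Nat.Partrec.Code.evaln z.2 c (Nat.pair (encode (tk z.1.1 ((jl z).getD 0)))
            (tgt z))).getD 0 := by
      intro c tgt jl htgt hjl
      have hb : Primrec fun z : (List ℕ × ℕ) × ℕ =>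
          ((z.2, c), Nat.pair (encode (tk z.1.1 ((jl z).getD 0))) (tgt z)) := by
        refine Primrec.pair (Primrec.pair Primrec.snd (Primrec.const c)) ?_
        refine Primrec₂.natPair.comp ?_ htgt
        refine Primrec.encode.comp (htk.comp (Primrec.fst.comp Primrec.fst) ?_)
        exact Primrec.option_getD.comp hjl (Primrec.const 0)
      exact Primrec.option_getD.comp
        ((Nat.Partrec.Code.primrec_evaln.comp hb).of_eq fun z => rfl) (Primrec.const 0)
    have h1 := hev c₁ (fun _ => 0) (fun z => jfB c₁ 0 z.1.1 z.2) (Primrec.const 0) hl1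
    have h2 := hev c₁ (fun z => z.1.2 + 1) (fun z => jfB c₁ (z.1.2+1) z.1.1 z.2)
      (Primrec.succ.comp (Primrec.snd.comp Primrec.fst)) hl2
    have h3 := hev c₂ (fun z => z.1.2) (fun z => jfB c₂ z.1.2 z.1.1 z.2)
      (Primrec.snd.comp Primrec.fst) hl3
    exact Primrec.ite (Primrec.eq.comp h1 (Primrec.const 0)) h2 h3
  have hFpr : Partrec₂ F := by
    apply Partrec.map
    · apply Partrec.rfind
      exact Computable₂.partrec₂
        ((hcondpr.to_comp).to₂ : Computable₂ fun (a : List ℕ × ℕ) (s : ℕ) =>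
          decide (condP a.1 a.2 s))
    · exact (hvalc.to_comp.to₂ : Computable₂ fun (a : List ℕ × ℕ) (s : ℕ) => val a.1 a.2 s)
  obtain ⟨e, he⟩ := codeQuery hFpr
  refine ⟨e, fun p X A hX hA n => ?_⟩
  obtain ⟨k1, hv1, hd1⟩ := hX 0
  obtain ⟨k2, hv2, hd2⟩ := hX (n + 1)
  obtain ⟨k3, hv3, hd3⟩ := hA n
  set K := k1 + k2 + k3 with hK
  -- halting implies at least k
  have hge : ∀ (eo t kk : ℕ), (∀ k' < kk, ¬(query eo p k' t).Dom) →
      ∀ s j, ((Nat.Partrec.Code.evaln s (Denumerable.ofNat Nat.Partrec.Code eo)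
        (Nat.pair (encode (pref p j)) t)).isSome = true) → kk ≤ j := by
    intro eo t kk hdiv s j hsome
    by_contra hlt
    push_neg at hlt
    obtain ⟨v, hv⟩ := Option.isSome_iff_exists.mp hsome
    have hm : v ∈ Nat.Partrec.Code.evaln s (Denumerable.ofNat Nat.Partrec.Code eo)
        (Nat.pair (encode (pref p j)) t) := hv
    have hev := Nat.Partrec.Code.evaln_sound hm
    refine hdiv j hlt ?_
    rw [query_def']
    exact Part.dom_iff_mem.mpr ⟨v, hev⟩
  -- membership facts and stages
  have hm1 : X 0 ∈ c₁.eval (Nat.pair (encode (pref p k1)) 0) := by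
    rw [hc₁, ← query_def']
    exact Part.eq_some_iff.mp hv1
  have hm2 : X (n+1) ∈ c₁.eval (Nat.pair (encode (pref p k2)) (n+1)) := by
    rw [hc₁, ← query_def']
    exact Part.eq_some_iff.mp hv2
  have hm3 : A n ∈ c₂.eval (Nat.pair (encode (pref p k3)) n) := by
    rw [hc₂, ← query_def']
    exact Part.eq_some_iff.mp hv3
  obtain ⟨s1, hs1⟩ := Nat.Partrec.Code.evaln_complete.mp hm1
  obtain ⟨s2, hs2⟩ := Nat.Partrec.Code.evaln_complete.mp hm2
  obtain ⟨s3, hs3⟩ := Nat.Partrec.Code.evaln_complete.mp hm3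
  set sm := max (max s1 s2) s3 with hsm
  have hs1' := Nat.Partrec.Code.evaln_mono (by omega : s1 ≤ sm) hs1
  have hs2' := Nat.Partrec.Code.evaln_mono (by omega : s2 ≤ sm) hs2
  have hs3' := Nat.Partrec.Code.evaln_mono (by omega : s3 ≤ sm) hs3
  -- the three bounded searches succeed exactly at the k's
  have hjf1 : jfB c₁ 0 (pref p K) sm = some k1 := by
    rw [hjfB]
    apply bFind_eq_some_of
    · rw [pref_length]; omega
    · rw [tk_pref (by omega : k1 ≤ K)]
      exact Option.isSome_iff_exists.mpr ⟨X 0, hs1'⟩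
    · intro i hi
      rw [tk_pref (by omega : i ≤ K)]
      by_contra hne
      rw [Bool.not_eq_false] at hne
      have := hge e₁ 0 k1 hd1 sm i (by rw [← hc₁]; exact hne)
      omega
  have hjf2 : jfB c₁ (n+1) (pref p K) sm = some k2 := by
    rw [hjfB]
    apply bFind_eq_some_of
    · rw [pref_length]; omega
    · rw [tk_pref (by omega : k2 ≤ K)]
      exact Option.isSome_iff_exists.mpr ⟨X (n+1), hs2'⟩
    · intro i hi
      rw [tk_pref (by omega : i ≤ K)]
      by_contra hne
      rw [Bool.not_eq_false] at hne
      have := hge e₁ (n+1) k2 hd2 sm i (by rw [← hc₁]; exact hne)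
      omega
  have hjf3 : jfB c₂ n (pref p K) sm = some k3 := by
    rw [hjfB]
    apply bFind_eq_some_of
    · rw [pref_length]; omega
    · rw [tk_pref (by omega : k3 ≤ K)]
      exact Option.isSome_iff_exists.mpr ⟨A n, hs3'⟩
    · intro i hi
      rw [tk_pref (by omega : i ≤ K)]
      by_contra hne
      rw [Bool.not_eq_false] at hne
      have := hge e₂ n k3 hd3 sm i (by rw [← hc₂]; exact hne)
      omega
  have hcondK : condP (pref p K) n sm := by
    rw [hcondP]
    refine ⟨by rw [hjf1]; rfl, by rw [hjf2]; rfl, by rw [hjf3]; rfl, ?_⟩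
    rw [hjf1, hjf2, hjf3, pref_length]
    rfl
  -- analysis of any stage where the condition holds
  have hanal : ∀ K' s, condP (pref p K') n s →
      K ≤ K' ∧ (K' = K → jfB c₁ 0 (pref p K) s = some k1 ∧
        jfB c₁ (n+1) (pref p K) s = some k2 ∧ jfB c₂ n (pref p K) s = some k3) := by
    intro K' s hc
    rw [hcondP] at hc
    obtain ⟨h1, h2, h3, h4⟩ := hc
    obtain ⟨j1, hj1⟩ := Option.isSome_iff_exists.mp h1
    obtain ⟨j2, hj2⟩ := Option.isSome_iff_exists.mp h2
    obtain ⟨j3, hj3⟩ := Option.isSome_iff_exists.mp h3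
    rw [hjfB] at hj1 hj2 hj3
    obtain ⟨hj1l, hj1p, hj1m⟩ := bFind_spec hj1
    obtain ⟨hj2l, hj2p, hj2m⟩ := bFind_spec hj2
    obtain ⟨hj3l, hj3p, hj3m⟩ := bFind_spec hj3
    rw [pref_length] at hj1l hj2l hj3l
    rw [tk_pref (by omega : j1 ≤ K')] at hj1p
    rw [tk_pref (by omega : j2 ≤ K')] at hj2p
    rw [tk_pref (by omega : j3 ≤ K')] at hj3p
    have hge1 : k1 ≤ j1 := hge e₁ 0 k1 hd1 s j1 (by rw [← hc₁]; exact hj1p)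
    have hge2 : k2 ≤ j2 := hge e₁ (n+1) k2 hd2 s j2 (by rw [← hc₁]; exact hj2p)
    have hge3 : k3 ≤ j3 := hge e₂ n k3 hd3 s j3 (by rw [← hc₂]; exact hj3p)
    have hsum : j1 + j2 + j3 = K' := by
      rw [hjfB] at h4
      rw [hj1, hj2, hj3, pref_length] at h4
      exact h4
    refine ⟨by omega, fun hKK => ?_⟩
    subst hKK
    have e1 : j1 = k1 := by omega
    have e2 : j2 = k2 := by omega
    have e3 : j3 = k3 := by omega
    subst e1; subst e2; subst e3
    exact ⟨by rw [hjfB]; exact hj1, by rw [hjfB]; exact hj2, by rw [hjfB]; exact hj3⟩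
  -- value computation at any valid stage for prefix length K
  have hvals : ∀ s, condP (pref p K) n s →
      val (pref p K) n s = (if X 0 = 0 then X (n+1) else A n) := by
    intro s hc
    obtain ⟨-, hjs⟩ := hanal K s hc
    obtain ⟨hj1, hj2, hj3⟩ := hjs rfl
    have hv1' : (Nat.Partrec.Code.evaln s c₁
        (Nat.pair (encode (tk (pref p K) ((jfB c₁ 0 (pref p K) s).getD 0))) 0)).getD 0 = X 0 := by
      rw [hj1]
      show (Nat.Partrec.Code.evaln s c₁ (Nat.pair (encode (tk (pref p K) k1)) 0)).getD 0 = X 0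
      rw [tk_pref (by omega : k1 ≤ K)]
      have hsome : (Nat.Partrec.Code.evaln s c₁
          (Nat.pair (encode (pref p k1)) 0)).isSome = true := by
        have := bFind_spec (by rw [hjfB] at hj1; exact hj1)
        rw [tk_pref (by omega : k1 ≤ K)] at this
        exact this.2.1
      obtain ⟨w, hw⟩ := Option.isSome_iff_exists.mp hsome
      have hwm : w ∈ Nat.Partrec.Code.evaln s c₁ (Nat.pair (encode (pref p k1)) 0) := hw
      have := Nat.Partrec.Code.evaln_sound hwm
      rw [hc₁, ← query_def', hv1] at this
      rw [hw]
      exact Part.mem_some_iff.mp this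
    have hv2' : (Nat.Partrec.Code.evaln s c₁
        (Nat.pair (encode (tk (pref p K) ((jfB c₁ (n+1) (pref p K) s).getD 0)))
          (n+1))).getD 0 = X (n+1) := by
      rw [hj2]
      show (Nat.Partrec.Code.evaln s c₁
        (Nat.pair (encode (tk (pref p K) k2)) (n+1))).getD 0 = X (n+1)
      rw [tk_pref (by omega : k2 ≤ K)]
      have hsome : (Nat.Partrec.Code.evaln s c₁
          (Nat.pair (encode (pref p k2)) (n+1))).isSome = true := by
        have := bFind_spec (by rw [hjfB] at hj2; exact hj2)
        rw [tk_pref (by omega : k2 ≤ K)] at this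
        exact this.2.1
      obtain ⟨w, hw⟩ := Option.isSome_iff_exists.mp hsome
      have hwm : w ∈ Nat.Partrec.Code.evaln s c₁ (Nat.pair (encode (pref p k2)) (n+1)) := hw
      have := Nat.Partrec.Code.evaln_sound hwm
      rw [hc₁, ← query_def', hv2] at this
      rw [hw]
      exact Part.mem_some_iff.mp this
    have hv3' : (Nat.Partrec.Code.evaln s c₂
        (Nat.pair (encode (tk (pref p K) ((jfB c₂ n (pref p K) s).getD 0))) n)).getD 0 = A n := by
      rw [hj3]
      show (Nat.Partrec.Code.evaln s c₂ (Nat.pair (encode (tk (pref p K) k3)) n)).getD 0 = A n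
      rw [tk_pref (by omega : k3 ≤ K)]
      have hsome : (Nat.Partrec.Code.evaln s c₂
          (Nat.pair (encode (pref p k3)) n)).isSome = true := by
        have := bFind_spec (by rw [hjfB] at hj3; exact hj3)
        rw [tk_pref (by omega : k3 ≤ K)] at this
        exact this.2.1
      obtain ⟨w, hw⟩ := Option.isSome_iff_exists.mp hsome
      have hwm : w ∈ Nat.Partrec.Code.evaln s c₂ (Nat.pair (encode (pref p k3)) n) := hw
      have := Nat.Partrec.Code.evaln_sound hwm
      rw [hc₂, ← query_def', hv3] at this
      rw [hw]
      exact Part.mem_some_iff.mp this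
    rw [hval]
    beta_reduce
    rw [hv1', hv2', hv3']
  -- conclude
  refine ⟨K, ?_, ?_⟩
  · rw [he, hF]
    beta_reduce
    have hDom : (Nat.rfind fun s => Part.some (decide (condP (pref p K) n s))).Dom := by
      refine Nat.rfind_dom.mpr ?_
      refine ⟨sm, Part.mem_some_iff.mpr ?_, fun {m} _ => trivial⟩
      rw [eq_comm, decide_eq_true_eq]
      exact hcondK
    set s0 := (Nat.rfind fun s => Part.some (decide (condP (pref p K) n s))).get hDom with hs0
    have hs0mem : s0 ∈ Nat.rfind fun s => Part.some (decide (condP (pref p K) n s)) :=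
      Part.get_mem hDom
    have hs0cond : condP (pref p K) n s0 := by
      have := Nat.rfind_spec hs0mem
      rw [Part.mem_some_iff] at this
      exact of_decide_eq_true this.symm
    rw [Part.eq_some_iff]
    exact Part.mem_map_iff _ |>.mpr ⟨s0, hs0mem, hvals s0 hs0cond⟩
  · intro K' hK'
    rw [he, hF]
    beta_reduce
    intro hdom
    have hdomr : (Nat.rfind fun s => Part.some (decide (condP (pref p K') n s))).Dom := hdom
    have hmem := Part.get_mem hdomr
    have hcond' : condP (pref p K') n ((Nat.rfind _).get hdomr) := by
      have := Nat.rfind_spec hmem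
      rw [Part.mem_some_iff] at this
      exact of_decide_eq_true this.symm
    have := (hanal K' _ hcond').1
    omega


/- ============ coordinate arithmetic helpers ============ -/

lemma pair_even (a b : Baire) (m : ℕ) : pair a b (2 * m) = a m := by
  have h1 : (2 * m) % 2 = 0 := by omega
  have h2 : (2 * m) / 2 = m := by omega
  rw [pair, if_pos h1, h2]

lemma pair_odd (a b : Baire) (m : ℕ) : pair a b (2 * m + 1) = b m := by
  have h1 : ¬((2 * m + 1) % 2 = 0) := by omega
  have h2 : (2 * m + 1) / 2 = m := by omega
  rw [pair, if_neg h1, h2]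

lemma cons_zero (e : ℕ) (q : Baire) : cons e q 0 = e := rfl

lemma cons_succ (e : ℕ) (q : Baire) (n : ℕ) : cons e q (n + 1) = q n := rfl

lemma tl_cons (e : ℕ) (q : Baire) : tl (cons e q) = q := rfl

lemma left_pair (a b : Baire) : left (pair a b) = a := by
  funext n; exact pair_even a b n

lemma right_pair (a b : Baire) : right (pair a b) = b := by
  funext n; exact pair_odd a b n

lemma parity_cases (P : ℕ → Prop) (h0 : ∀ j, P (2*j)) (h1 : ∀ j, P (2*j+1)) : ∀ n, P n := by
  intro n
  rcases Nat.even_or_odd n with ⟨j, hj⟩ | ⟨j, hj⟩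
  · have : n = 2*j := by omega
    rw [this]; exact h0 j
  · have : n = 2*j+1 := by omega
    rw [this]; exact h1 j

lemma cons2pair_two (q w : Baire) : cons 2 (pair q w) 2 = w 0 := by
  show pair q w 1 = w 0
  have : (1:ℕ) = 2*0+1 := rfl
  rw [this, pair_odd]

lemma cons2pair_odd (q w : Baire) (m : ℕ) : cons 2 (pair q w) (2*m+1) = q m := by
  show pair q w (2*m) = q m
  exact pair_even q w m

lemma primrec_affine (a b : ℕ) : Primrec fun n : ℕ => a * n + b :=
  Primrec.nat_add.comp (Primrec.nat_mul.comp (Primrec.const a) Primrec.id) (Primrec.const b)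

/-- the pure-rearrangement code lemma -/
lemma combPure (σ' : ℕ → ℕ) (g' : ℕ → ℕ → ℕ) (hσ : Primrec σ') (hg : Primrec₂ g') :
    ∃ e, ∀ x : Baire, FEval e x (fun n => g' n (x (σ' n))) := by
  obtain ⟨idC, hid⟩ := exists_idCode
  obtain ⟨e, he⟩ := comb1 idC idC (fun i => Sum.inl i) (fun i => Sum.inl i) σ' σ' g' g'
    (Primrec.sumInl.comp Primrec.id) (Primrec.sumInl.comp Primrec.id) hσ hσ hg hg
    (fun i j hij => by injection hij with hh; omega)
    (fun i j hij => by injection hij with hh; omega)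
  refine ⟨e, fun x => ?_⟩
  have hRt : Rt (fun i => Sum.inl i) x = x := rfl
  rcases eq_or_ne (x 0) 0 with hx | hx
  · exact (he x).1 hx x (by rw [hRt]; exact hid x)
  · exact (he x).2 hx x (by rw [hRt]; exact hid x)

/- ============ the intermediate problem ============ -/

/-- the `m`-component of the intermediate problem -/
def mA (f : Problem) (D : Set (ℕ × ℕ)) : Problem := fun x =>
  {z | left x ∈ dom f ∧ (∃ n, right x = const n) ∧
    ((∃ z' ∈ f (left x), z = cons 0 z') ∨
     (∃ q' c, 1 ≤ c ∧ (x 1, c) ∉ D ∧ z = cons 2 (pair q' (const c))))}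

/-- the intermediate problem -/
def gd (h f : Problem) (D : Set (ℕ × ℕ)) : Problem := fun X =>
  if X 0 = 0 then {z | ∃ q ∈ h (tl X), ∃ c, z = cons 2 (pair q (const c))}
  else if X 0 = 1 then mA f D (tl X)
  else ∅

lemma gd_zero {h f : Problem} {D : Set (ℕ × ℕ)} {X : Baire} (h0 : X 0 = 0) :
    gd h f D X = {z | ∃ q ∈ h (tl X), ∃ c, z = cons 2 (pair q (const c))} := by
  rw [gd, if_pos h0]

lemma gd_one {h f : Problem} {D : Set (ℕ × ℕ)} {X : Baire} (h1 : X 0 = 1) :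
    gd h f D X = mA f D (tl X) := by
  rw [gd, if_neg (by omega), if_pos h1]

lemma gd_other {h f : Problem} {D : Set (ℕ × ℕ)} {X : Baire} (h0 : X 0 ≠ 0) (h1 : X 0 ≠ 1) :
    gd h f D X = ∅ := by
  rw [gd, if_neg h0, if_neg h1]

lemma dom_gd_zero {h f : Problem} {D : Set (ℕ × ℕ)} {X : Baire} (h0 : X 0 = 0) :
    X ∈ dom (gd h f D) ↔ tl X ∈ dom h := by
  constructor
  · rintro ⟨z, hz⟩
    rw [gd_zero h0] at hz
    obtain ⟨q, hq, -⟩ := hz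
    exact ⟨q, hq⟩
  · rintro ⟨q, hq⟩
    exact ⟨cons 2 (pair q (const 0)), by rw [gd_zero h0]; exact ⟨q, hq, 0, rfl⟩⟩

lemma dom_gd_one {h f : Problem} {D : Set (ℕ × ℕ)} {X : Baire} (h1 : X 0 = 1) :
    X ∈ dom (gd h f D) ↔ (left (tl X) ∈ dom f ∧ ∃ n, right (tl X) = const n) := by
  constructor
  · rintro ⟨z, hz⟩
    rw [gd_one h1] at hz
    exact ⟨hz.1, hz.2.1⟩
  · rintro ⟨⟨z', hz'⟩, hn⟩
    refine ⟨cons 0 z', ?_⟩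
    rw [gd_one h1]
    exact ⟨⟨z', hz'⟩, hn, Or.inl ⟨z', hz', rfl⟩⟩

/- ============ the positive reductions ============ -/

lemma wle_h_gd (h f : Problem) (D : Set (ℕ × ℕ)) : WLE h (gd h f D) := by
  -- forward : x ↦ cons 0 x
  obtain ⟨eΦ, hEΦ⟩ := combPure (fun n => n - 1) (fun n v => if n = 0 then 0 else v)
    Primrec.pred
    (Primrec.ite (Primrec.eq.comp Primrec.fst (Primrec.const 0)) (Primrec.const 0) Primrec.snd)
  -- backward : z ↦ (fun n => z (4n+3))
  obtain ⟨eΨ, hEΨ⟩ := combPure (fun n => 4 * n + 3) (fun _ v => v)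
    (primrec_affine 4 3) Primrec₂.right
  refine ⟨eΦ, eΨ, fun x hx => ?_⟩
  have hfwd : FEval eΦ x (cons 0 x) := by
    have := hEΦ x
    have heq : (fun n => if n = 0 then 0 else x (n - 1)) = cons 0 x := by
      funext n
      cases n with
      | zero => rfl
      | succ m => simp [cons_succ]
    rw [heq] at this
    exact this
  refine ⟨cons 0 x, hfwd, ?_, ?_⟩
  · rw [dom_gd_zero (by rfl)]
    exact hx
  · intro qg hqg
    rw [gd_zero (by rfl), tl_cons] at hqg
    obtain ⟨q, hqh, c, hqeq⟩ := hqg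
    refine ⟨fun n => (pair x qg) (4 * n + 3), hEΨ (pair x qg), ?_⟩
    have : (fun n => (pair x qg) (4 * n + 3)) = q := by
      funext n
      have h1 : 4 * n + 3 = 2 * (2 * n + 1) + 1 := by omega
      rw [h1, pair_odd, hqeq, cons2pair_odd]
    rw [this]
    exact hqh

lemma wle_gd_f (h f : Problem) (D : Set (ℕ × ℕ)) (huv : WLE h f) : WLE (gd h f D) f := by
  obtain ⟨u, v, huvs⟩ := huv
  obtain ⟨idC, hid⟩ := exists_idCode
  -- forward: branch0: Φu(tl X); branch1: left (tl X)
  obtain ⟨eΦ, hEΦ⟩ := comb1 u idC (fun i => Sum.inl (i + 1)) (fun i => Sum.inl i)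
    (fun n => n) (fun n => 2 * n + 1) (fun _ v => v) (fun _ v => v)
    (Primrec.sumInl.comp Primrec.succ) (Primrec.sumInl.comp Primrec.id)
    Primrec.id (primrec_affine 2 1) Primrec₂.right Primrec₂.right
    (fun i j hij => by injection hij with hh; omega)
    (fun i j hij => by injection hij with hh; omega)
  -- backward
  obtain ⟨eΨ, hEΨ⟩ := comb1 v idC
    (fun i => if i % 2 = 0 then Sum.inl (i + 2) else Sum.inl i) (fun i => Sum.inl i)
    (fun n => (n - 1) / 2) (fun n => 2 * (n - 1) + 1)
    (fun n v => if n = 0 then 2 else if n % 2 = 1 then v else 0)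
    (fun n v => if n = 0 then 0 else v)
    (Primrec.ite
      (Primrec.eq.comp (Primrec.nat_mod.comp Primrec.id (Primrec.const 2)) (Primrec.const 0))
      (Primrec.sumInl.comp ((primrec_affine 1 2).of_eq (fun i => by omega)))
      (Primrec.sumInl.comp Primrec.id))
    (Primrec.sumInl.comp Primrec.id)
    (Primrec.nat_div.comp Primrec.pred (Primrec.const 2))
    ((primrec_affine 2 1).comp Primrec.pred)
    (Primrec.ite (Primrec.eq.comp Primrec.fst (Primrec.const 0)) (Primrec.const 2)
      (Primrec.ite
        (Primrec.eq.comp (Primrec.nat_mod.comp Primrec.fst (Primrec.const 2)) (Primrec.const 1))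
        Primrec.snd (Primrec.const 0)))
    (Primrec.ite (Primrec.eq.comp Primrec.fst (Primrec.const 0)) (Primrec.const 0) Primrec.snd)
    (fun i j hij => by
      have hij' : (if i % 2 = 0 then Sum.inl (i + 2) else Sum.inl i) = (Sum.inl j : ℕ ⊕ ℕ) := hij
      by_cases hi : i % 2 = 0
      · rw [if_pos hi] at hij'; injection hij' with hh; omega
      · rw [if_neg hi] at hij'; injection hij' with hh; omega)
    (fun i j hij => by injection hij with hh; omega)
  refine ⟨eΦ, eΨ, fun X hX => ?_⟩
  rcases eq_or_ne (X 0) 0 with h0 | h0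
  · -- h-branch
    have hdomh : tl X ∈ dom h := (dom_gd_zero h0).mp hX
    obtain ⟨Y, hYu, hYdom, hvclause⟩ := huvs (tl X) hdomh
    have hRt : Rt (fun i => Sum.inl (i + 1)) X = tl X := rfl
    have hfwd : FEval eΦ X Y := (hEΦ X).1 h0 Y (by rw [hRt]; exact hYu)
    refine ⟨Y, hfwd, hYdom, ?_⟩
    intro qf hqf
    obtain ⟨r0, hr0v, hr0h⟩ := hvclause qf hqf
    have hz0 : (pair X qf) 0 = 0 := by
      rw [show (0:ℕ) = 2*0 from rfl, pair_even]
      exact h0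
    have hRt0 : Rt (fun i => if i % 2 = 0 then Sum.inl (i + 2) else Sum.inl i) (pair X qf)
        = pair (tl X) qf := by
      funext i
      refine parity_cases
        (fun i => Rt (fun i => if i % 2 = 0 then Sum.inl (i + 2) else Sum.inl i) (pair X qf) i
          = pair (tl X) qf i) ?_ ?_ i
      · intro j
        show Sum.elim (pair X qf) id
          (if (2*j) % 2 = 0 then Sum.inl (2*j + 2) else Sum.inl (2*j)) = pair (tl X) qf (2*j)
        rw [if_pos (by omega)]
        show pair X qf (2*j + 2) = pair (tl X) qf (2*j)
        rw [show 2*j+2 = 2*(j+1) from by omega, pair_even, pair_even]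
        rfl
      · intro j
        show Sum.elim (pair X qf) id
          (if (2*j+1) % 2 = 0 then Sum.inl (2*j+1+2) else Sum.inl (2*j+1)) = pair (tl X) qf (2*j+1)
        rw [if_neg (by omega)]
        show pair X qf (2*j+1) = pair (tl X) qf (2*j+1)
        rw [pair_odd, pair_odd]
    have hbwd : FEval eΨ (pair X qf)
        (fun n => if n = 0 then 2 else if n % 2 = 1 then r0 ((n-1)/2) else 0) :=
      (hEΨ (pair X qf)).1 hz0 r0 (by rw [hRt0]; exact hr0v)
    refine ⟨_, hbwd, ?_⟩
    rw [gd_zero h0]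
    refine ⟨r0, hr0h, 0, ?_⟩
    funext n
    cases n with
    | zero => rfl
    | succ m =>
      rw [cons_succ]
      refine parity_cases (fun m =>
        (if m+1 = 0 then 2 else if (m+1) % 2 = 1 then r0 ((m+1-1)/2) else 0)
          = pair r0 (const 0) m) ?_ ?_ m
      · intro j
        rw [pair_even, if_neg (by omega), if_pos (by omega)]
        congr 1
        omega
      · intro j
        rw [pair_odd, if_neg (by omega), if_neg (by omega)]
        rfl
  · -- m-branch: X 0 must be 1
    have h1 : X 0 = 1 := by
      by_contra hne
      obtain ⟨z, hz⟩ := hX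
      rw [gd_other h0 hne] at hz
      exact hz
    obtain ⟨hfdom, hn⟩ := (dom_gd_one h1).mp hX
    have hRtid : Rt (fun i => Sum.inl i) X = X := rfl
    have hfwd : FEval eΦ X (fun n => X (2*n+1)) :=
      (hEΦ X).2 (by omega) X (by rw [hRtid]; exact hid X)
    have hleft : (fun n => X (2*n+1)) = left (tl X) := rfl
    refine ⟨left (tl X), by rw [← hleft]; exact hfwd, hfdom, ?_⟩
    intro qf hqf
    have hz0 : (pair X qf) 0 ≠ 0 := by
      rw [show (0:ℕ) = 2*0 from rfl, pair_even]
      omega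
    have hRtid2 : Rt (fun i => Sum.inl i) (pair X qf) = pair X qf := rfl
    have hbwd := (hEΨ (pair X qf)).2 hz0 (pair X qf) (by rw [hRtid2]; exact hid (pair X qf))
    have hout : (fun n => if n = 0 then 0 else (pair X qf) (2*(n-1)+1)) = cons 0 qf := by
      funext n
      cases n with
      | zero => rfl
      | succ m =>
        rw [if_neg (by omega), show m+1-1 = m from rfl, pair_odd]
        rfl
    refine ⟨cons 0 qf, by rw [← hout]; exact hbwd, ?_⟩
    rw [gd_one h1]
    exact ⟨hfdom, hn, Or.inl ⟨qf, hqf, rfl⟩⟩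


/- ============ the finite-injury style construction ============ -/

/-- diagonal instances -/
def XCi (p : Baire) (n : ℕ) : Baire := cons 1 (pair p (const n))

/-- a witness that a candidate reduction from `gd` to `h` fails the `cons 0` format
at diagonal position `n`, with escape value `c` -/
def CW (h f : Problem) (φ ψ n c : ℕ) : Prop :=
  ∃ p ∈ dom f, ∃ X', FEval φ (XCi p n) X' ∧ X' ∈ dom h ∧ ∃ qh ∈ h X', ∃ r,
    FEval ψ (pair (XCi p n) qh) r ∧ (¬ ∃ z ∈ f p, r = cons 0 z) ∧ c = r 2

/-- a killable pair for a candidate reduction from `f` to `gd` -/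
def M2P (h f : Problem) (φ ψ : ℕ) (Dd : Set (ℕ × ℕ)) (pr : ℕ × ℕ) : Prop :=
  1 ≤ pr.2 ∧ pr ∉ Dd ∧ ∃ p ∈ dom f, ∃ X, FEval φ p X ∧ X 0 = 1 ∧ X 2 = pr.1 ∧ ∃ w : Baire,
    ¬ ∃ r, FEval ψ (pair p (cons 2 (pair w (const pr.2)))) r ∧ r ∈ f p

def freshN (st : List (ℕ × ℕ) × List (ℕ × ℕ)) : ℕ :=
  ((st.1 ++ st.2).map Prod.fst).foldr max 0 + 1

open scoped Classical in
noncomputable def stepSt (h f : Problem) (t : ℕ) (st : List (ℕ × ℕ) × List (ℕ × ℕ)) :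
    List (ℕ × ℕ) × List (ℕ × ℕ) :=
  if t % 2 = 0 then
    if hcw : ∃ c, CW h f (Nat.unpair (t / 2)).1 (Nat.unpair (t / 2)).2 (freshN st) c then
      ((freshN st, hcw.choose) :: st.1, st.2)
    else st
  else
    if hm : ∃ pr, M2P h f (Nat.unpair (t / 2)).1 (Nat.unpair (t / 2)).2 {q | q ∈ st.1} pr then
      (st.1, hm.choose :: st.2)
    else st

noncomputable def stagesSt (h f : Problem) : ℕ → List (ℕ × ℕ) × List (ℕ × ℕ)
  | 0 => ([], [])
  | (t+1) => stepSt h f t (stagesSt h f t)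

def DeadSet (h f : Problem) : Set (ℕ × ℕ) := {pr | ∃ t, pr ∈ (stagesSt h f t).1}

lemma foldr_max_ge {l : List ℕ} {x : ℕ} (hx : x ∈ l) : x ≤ l.foldr max 0 := by
  induction l with
  | nil => cases hx
  | cons b l ih =>
    rcases List.mem_cons.mp hx with hh | hh
    · subst hh
      exact le_max_left _ _
    · exact (ih hh).trans (le_max_right _ _)

lemma step_dead_sub (h f : Problem) (t : ℕ) (st : List (ℕ × ℕ) × List (ℕ × ℕ)) :
    ∀ pr ∈ st.1, pr ∈ (stepSt h f t st).1 := by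
  intro pr hpr
  rw [stepSt]
  split_ifs <;> first | exact List.mem_cons_of_mem _ hpr | exact hpr

lemma step_prot_sub (h f : Problem) (t : ℕ) (st : List (ℕ × ℕ) × List (ℕ × ℕ)) :
    ∀ pr ∈ st.2, pr ∈ (stepSt h f t st).2 := by
  intro pr hpr
  rw [stepSt]
  split_ifs <;> first | exact List.mem_cons_of_mem _ hpr | exact hpr

lemma stages_dead_mono (h f : Problem) {s t : ℕ} (hst : s ≤ t) :
    ∀ pr ∈ (stagesSt h f s).1, pr ∈ (stagesSt h f t).1 := by
  induction t with
  | zero =>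
    intro pr hpr
    have : s = 0 := by omega
    subst this
    exact hpr
  | succ t ih =>
    intro pr hpr
    rcases Nat.lt_succ_iff_lt_or_eq.mp (Nat.lt_succ_of_le hst) with hlt | heq
    · exact step_dead_sub h f t _ pr (ih (by omega) pr hpr)
    · subst heq
      exact hpr

lemma stages_prot_mono (h f : Problem) {s t : ℕ} (hst : s ≤ t) :
    ∀ pr ∈ (stagesSt h f s).2, pr ∈ (stagesSt h f t).2 := by
  induction t with
  | zero =>
    intro pr hpr
    have : s = 0 := by omega
    subst this
    exact hpr
  | succ t ih =>
    intro pr hpr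
    rcases Nat.lt_succ_iff_lt_or_eq.mp (Nat.lt_succ_of_le hst) with hlt | heq
    · exact step_prot_sub h f t _ pr (ih (by omega) pr hpr)
    · subst heq
      exact hpr

lemma stages_disj (h f : Problem) : ∀ t, ∀ pr ∈ (stagesSt h f t).1,
    pr ∉ (stagesSt h f t).2 := by
  intro t
  induction t with
  | zero => intro pr hpr; cases hpr
  | succ t ih =>
    intro pr hpr hpr'
    show False
    rw [show stagesSt h f (t+1) = stepSt h f t (stagesSt h f t) from rfl] at hpr hpr'
    rw [stepSt] at hpr hpr'
    split_ifs at hpr hpr' with h1 h2 h3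
    · -- even, kill
      rcases List.mem_cons.mp hpr with he | he
      · subst he
        have hmem : (freshN (stagesSt h f t), (h2).choose).1 ∈
            (((stagesSt h f t).1 ++ (stagesSt h f t).2).map Prod.fst) :=
          List.mem_map_of_mem (List.mem_append_right _ hpr')
        have := foldr_max_ge hmem
        simp only [freshN] at this
        omega
      · exact ih pr he hpr'
    · exact ih pr hpr hpr'
    · -- odd, protect
      rcases List.mem_cons.mp hpr' with he | he
      · subst he
        exact (h3).choose_spec.2.1 hpr
      · exact ih pr hpr he
    · exact ih pr hpr hpr'

lemma prot_alive (h f : Problem) {pr : ℕ × ℕ} {t : ℕ} (hp : pr ∈ (stagesSt h f t).2) :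
    pr ∉ DeadSet h f := by
  rintro ⟨t', hd⟩
  have h1 : pr ∈ (stagesSt h f (max t t')).1 := stages_dead_mono h f (le_max_right _ _) pr hd
  have h2 : pr ∈ (stagesSt h f (max t t')).2 := stages_prot_mono h f (le_max_left _ _) pr hp
  exact stages_disj h f (max t t') pr h1 h2

/- ============ basic facts about the diagonal instances ============ -/

lemma XCi_zero (p : Baire) (n : ℕ) : XCi p n 0 = 1 := rfl

lemma tl_XCi (p : Baire) (n : ℕ) : tl (XCi p n) = pair p (const n) := rfl

lemma XCi_dom {h f : Problem} {D : Set (ℕ × ℕ)} {p : Baire} (n : ℕ) (hp : p ∈ dom f) :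
    XCi p n ∈ dom (gd h f D) := by
  rw [dom_gd_one (XCi_zero p n)]
  constructor
  · rw [tl_XCi, left_pair]
    exact hp
  · exact ⟨n, by rw [tl_XCi, right_pair]⟩

/- ============ first diagonalization : ¬ (gd ≤ h) ============ -/

lemma not_wle_gd_h (h f : Problem) (hfh : ¬ WLE f h) :
    ¬ WLE (gd h f (DeadSet h f)) h := by
  classical
  rintro ⟨φ, ψ, hred⟩
  set D := DeadSet h f with hD
  set nh := freshN (stagesSt h f (2 * Nat.pair φ ψ)) with hnh
  have hstep : ∀ st, stepSt h f (2 * Nat.pair φ ψ) st =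
      if hcw : ∃ c, CW h f φ ψ (freshN st) c then
        ((freshN st, hcw.choose) :: st.1, st.2) else st := by
    intro st
    rw [stepSt, if_pos (by omega : (2 * Nat.pair φ ψ) % 2 = 0)]
    simp only [show 2 * Nat.pair φ ψ / 2 = Nat.pair φ ψ from by omega, Nat.unpair_pair]
  by_cases hcw : ∃ c, CW h f φ ψ nh c
  · -- the kill case
    have hdead : (nh, hcw.choose) ∈ D := by
      refine ⟨2 * Nat.pair φ ψ + 1, ?_⟩
      show (nh, hcw.choose) ∈ (stepSt h f (2 * Nat.pair φ ψ) (stagesSt h f (2 * Nat.pair φ ψ))).1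
      rw [hstep, dif_pos hcw]
      exact List.mem_cons_self
    obtain ⟨p0, hp0dom, X', hX'f, hX'dom, qh, hqh, r0, hr0f, hr0bad, hcval⟩ := hcw.choose_spec
    obtain ⟨X'', hX''f, hX''dom, hback⟩ := hred (XCi p0 nh) (XCi_dom nh hp0dom)
    have hXX : X'' = X' := FEval_unique hX''f hX'f
    obtain ⟨r1, hr1f, hr1mem⟩ := hback qh (by rw [hXX]; exact hqh)
    have hrr : r1 = r0 := FEval_unique hr1f hr0f
    rw [hrr] at hr1mem
    rw [gd_one (XCi_zero p0 nh)] at hr1mem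
    obtain ⟨-, -, hcases⟩ := hr1mem
    rcases hcases with ⟨z, hz, hzeq⟩ | ⟨q', c, hc1, halive, hre⟩
    · refine hr0bad ⟨z, ?_, hzeq⟩
      rw [tl_XCi, left_pair] at hz
      exact hz
    · have hpos : (tl (XCi p0 nh)) 1 = nh := by
        rw [tl_XCi]
        rw [show (1:ℕ) = 2*0+1 from rfl, pair_odd]
        rfl
      apply halive
      rw [hpos]
      have hr2 : r0 2 = c := by
        rw [hre]
        exact cons2pair_two q' (const c)
      rw [← hr2, ← hcval]
      exact hdead
  · -- the GOOD case : build a reduction from f to h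
    exfalso
    apply hfh
    -- forward code : p ↦ Φ_φ (XCi p nh)
    obtain ⟨eΦ, hEΦ⟩ := comb1 φ φ
      (fun i => if i = 0 then Sum.inr 1 else
        if i % 2 = 1 then Sum.inl ((i-1)/2) else Sum.inr nh)
      (fun i => if i = 0 then Sum.inr 1 else
        if i % 2 = 1 then Sum.inl ((i-1)/2) else Sum.inr nh)
      (fun n => n) (fun n => n) (fun _ v => v) (fun _ v => v)
      (Primrec.ite (Primrec.eq.comp Primrec.id (Primrec.const 0))
        (Primrec.const (Sum.inr 1))
        (Primrec.ite (Primrec.eq.comp (Primrec.nat_mod.comp Primrec.id (Primrec.const 2))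
            (Primrec.const 1))
          (Primrec.sumInl.comp (Primrec.nat_div.comp Primrec.pred (Primrec.const 2)))
          (Primrec.const (Sum.inr nh))))
      (Primrec.ite (Primrec.eq.comp Primrec.id (Primrec.const 0))
        (Primrec.const (Sum.inr 1))
        (Primrec.ite (Primrec.eq.comp (Primrec.nat_mod.comp Primrec.id (Primrec.const 2))
            (Primrec.const 1))
          (Primrec.sumInl.comp (Primrec.nat_div.comp Primrec.pred (Primrec.const 2)))
          (Primrec.const (Sum.inr nh))))
      Primrec.id Primrec.id Primrec₂.right Primrec₂.right
      (fun i j hij => by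
        have hij' : (if i = 0 then Sum.inr 1 else
            if i % 2 = 1 then Sum.inl ((i-1)/2) else Sum.inr nh) = (Sum.inl j : ℕ ⊕ ℕ) := hij
        by_cases h0 : i = 0
        · rw [if_pos h0] at hij'; exact absurd hij' (by simp)
        · rw [if_neg h0] at hij'
          by_cases h1 : i % 2 = 1
          · rw [if_pos h1] at hij'; injection hij' with hh; omega
          · rw [if_neg h1] at hij'; exact absurd hij' (by simp))
      (fun i j hij => by
        have hij' : (if i = 0 then Sum.inr 1 else
            if i % 2 = 1 then Sum.inl ((i-1)/2) else Sum.inr nh) = (Sum.inl j : ℕ ⊕ ℕ) := hij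
        by_cases h0 : i = 0
        · rw [if_pos h0] at hij'; exact absurd hij' (by simp)
        · rw [if_neg h0] at hij'
          by_cases h1 : i % 2 = 1
          · rw [if_pos h1] at hij'; injection hij' with hh; omega
          · rw [if_neg h1] at hij'; exact absurd hij' (by simp))
    -- backward code : (p, qh) ↦ tail of Ψ_ψ (pair (XCi p nh) qh)
    obtain ⟨eΨ, hEΨ⟩ := comb1 ψ ψ
      (fun i => if i % 2 = 1 then Sum.inl i else
        if i = 0 then Sum.inr 1 else
        if (i/2 - 1) % 2 = 0 then Sum.inl (i/2 - 1) else Sum.inr nh)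
      (fun i => if i % 2 = 1 then Sum.inl i else
        if i = 0 then Sum.inr 1 else
        if (i/2 - 1) % 2 = 0 then Sum.inl (i/2 - 1) else Sum.inr nh)
      (fun n => n + 1) (fun n => n + 1) (fun _ v => v) (fun _ v => v)
      (Primrec.ite (Primrec.eq.comp (Primrec.nat_mod.comp Primrec.id (Primrec.const 2))
          (Primrec.const 1))
        (Primrec.sumInl.comp Primrec.id)
        (Primrec.ite (Primrec.eq.comp Primrec.id (Primrec.const 0))
          (Primrec.const (Sum.inr 1))
          (Primrec.ite (Primrec.eq.comp
              (Primrec.nat_mod.comp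
                (Primrec.pred.comp (Primrec.nat_div.comp Primrec.id (Primrec.const 2)))
                (Primrec.const 2)) (Primrec.const 0))
            (Primrec.sumInl.comp
              (Primrec.pred.comp (Primrec.nat_div.comp Primrec.id (Primrec.const 2))))
            (Primrec.const (Sum.inr nh)))))
      (Primrec.ite (Primrec.eq.comp (Primrec.nat_mod.comp Primrec.id (Primrec.const 2))
          (Primrec.const 1))
        (Primrec.sumInl.comp Primrec.id)
        (Primrec.ite (Primrec.eq.comp Primrec.id (Primrec.const 0))
          (Primrec.const (Sum.inr 1))
          (Primrec.ite (Primrec.eq.comp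
              (Primrec.nat_mod.comp
                (Primrec.pred.comp (Primrec.nat_div.comp Primrec.id (Primrec.const 2)))
                (Primrec.const 2)) (Primrec.const 0))
            (Primrec.sumInl.comp
              (Primrec.pred.comp (Primrec.nat_div.comp Primrec.id (Primrec.const 2))))
            (Primrec.const (Sum.inr nh)))))
      Primrec.succ Primrec.succ Primrec₂.right Primrec₂.right
      (fun i j hij => by
        have hij' : (if i % 2 = 1 then Sum.inl i else
            if i = 0 then Sum.inr 1 else
            if (i/2 - 1) % 2 = 0 then Sum.inl (i/2 - 1) else Sum.inr nh)
            = (Sum.inl j : ℕ ⊕ ℕ) := hij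
        by_cases h1 : i % 2 = 1
        · rw [if_pos h1] at hij'; injection hij' with hh; omega
        · rw [if_neg h1] at hij'
          by_cases h0 : i = 0
          · rw [if_pos h0] at hij'; exact absurd hij' (by simp)
          · rw [if_neg h0] at hij'
            by_cases h2 : (i/2 - 1) % 2 = 0
            · rw [if_pos h2] at hij'; injection hij' with hh; omega
            · rw [if_neg h2] at hij'; exact absurd hij' (by simp))
      (fun i j hij => by
        have hij' : (if i % 2 = 1 then Sum.inl i else
            if i = 0 then Sum.inr 1 else
            if (i/2 - 1) % 2 = 0 then Sum.inl (i/2 - 1) else Sum.inr nh)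
            = (Sum.inl j : ℕ ⊕ ℕ) := hij
        by_cases h1 : i % 2 = 1
        · rw [if_pos h1] at hij'; injection hij' with hh; omega
        · rw [if_neg h1] at hij'
          by_cases h0 : i = 0
          · rw [if_pos h0] at hij'; exact absurd hij' (by simp)
          · rw [if_neg h0] at hij'
            by_cases h2 : (i/2 - 1) % 2 = 0
            · rw [if_pos h2] at hij'; injection hij' with hh; omega
            · rw [if_neg h2] at hij'; exact absurd hij' (by simp))
    -- semantic identification of the rearrangements
    have hRtC : ∀ pp : Baire,
        Rt (fun i => if i = 0 then Sum.inr 1 else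
          if i % 2 = 1 then Sum.inl ((i-1)/2) else Sum.inr nh) pp = XCi pp nh := by
      intro pp
      funext i
      show Sum.elim pp id (if i = 0 then Sum.inr 1 else
        if i % 2 = 1 then Sum.inl ((i-1)/2) else Sum.inr nh) = XCi pp nh i
      cases i with
      | zero => rfl
      | succ m =>
        rw [if_neg (by omega)]
        refine parity_cases (fun m => Sum.elim pp id (if (m+1) % 2 = 1
          then Sum.inl ((m+1-1)/2) else Sum.inr nh) = XCi pp nh (m+1)) ?_ ?_ m
        · intro jj
          rw [if_pos (by omega)]
          show pp ((2*jj+1-1)/2) = (pair pp (const nh)) (2*jj)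
          rw [pair_even, show (2*jj+1-1)/2 = jj from by omega]
        · intro jj
          rw [if_neg (by omega)]
          show nh = (pair pp (const nh)) (2*jj+1)
          rw [pair_odd]
          rfl
    have hRtD : ∀ (pp qh : Baire),
        Rt (fun i => if i % 2 = 1 then Sum.inl i else
          if i = 0 then Sum.inr 1 else
          if (i/2 - 1) % 2 = 0 then Sum.inl (i/2 - 1) else Sum.inr nh) (pair pp qh)
          = pair (XCi pp nh) qh := by
      intro pp qh
      funext i
      refine parity_cases (fun i =>
        Rt (fun i => if i % 2 = 1 then Sum.inl i else
          if i = 0 then Sum.inr 1 else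
          if (i/2 - 1) % 2 = 0 then Sum.inl (i/2 - 1) else Sum.inr nh) (pair pp qh) i
        = pair (XCi pp nh) qh i) ?_ ?_ i
      · intro m
        show Sum.elim (pair pp qh) id (if (2*m) % 2 = 1 then Sum.inl (2*m) else
          if 2*m = 0 then Sum.inr 1 else
          if ((2*m)/2 - 1) % 2 = 0 then Sum.inl ((2*m)/2 - 1) else Sum.inr nh)
          = pair (XCi pp nh) qh (2*m)
        rw [if_neg (by omega), pair_even]
        cases m with
        | zero => rw [if_pos rfl]; rfl
        | succ mm =>
          rw [if_neg (by omega)]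
          have hq : (2*(mm+1))/2 - 1 = mm := by omega
          rw [hq]
          refine parity_cases (fun mm => Sum.elim (pair pp qh) id
            (if mm % 2 = 0 then Sum.inl mm else Sum.inr nh) = XCi pp nh (mm+1)) ?_ ?_ mm
          · intro jj
            rw [if_pos (by omega)]
            show pair pp qh (2*jj) = (pair pp (const nh)) (2*jj)
            rw [pair_even, pair_even]
          · intro jj
            rw [if_neg (by omega)]
            show nh = (pair pp (const nh)) (2*jj+1)
            rw [pair_odd]
            rfl
      · intro m
        show Sum.elim (pair pp qh) id (if (2*m+1) % 2 = 1 then Sum.inl (2*m+1) else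
          if 2*m+1 = 0 then Sum.inr 1 else
          if ((2*m+1)/2 - 1) % 2 = 0 then Sum.inl ((2*m+1)/2 - 1) else Sum.inr nh)
          = pair (XCi pp nh) qh (2*m+1)
        rw [if_pos (by omega)]
        show pair pp qh (2*m+1) = pair (XCi pp nh) qh (2*m+1)
        rw [pair_odd, pair_odd]
    -- assemble the reduction from f to h
    refine ⟨eΦ, eΨ, fun p hp => ?_⟩
    obtain ⟨X', hX'f, hX'dom, hback⟩ := hred (XCi p nh) (XCi_dom nh hp)
    have hfwd : FEval eΦ p X' := by
      rcases eq_or_ne (p 0) 0 with h0 | h0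
      · exact (hEΦ p).1 h0 X' (by rw [hRtC p]; exact hX'f)
      · exact (hEΦ p).2 h0 X' (by rw [hRtC p]; exact hX'f)
    refine ⟨X', hfwd, hX'dom, ?_⟩
    intro qh hqh
    obtain ⟨r, hrf, hrmem⟩ := hback qh hqh
    have hgood : ∃ z ∈ f p, r = cons 0 z := by
      by_contra hbad
      exact hcw ⟨r 2, p, hp, X', hX'f, hX'dom, qh, hqh, r, hrf, hbad, rfl⟩
    obtain ⟨z, hzf, hzeq⟩ := hgood
    have hbwd : FEval eΨ (pair p qh) (fun n => r (n+1)) := by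
      rcases eq_or_ne ((pair p qh) 0) 0 with h0 | h0
      · exact (hEΨ _).1 h0 r (by rw [hRtD p qh]; exact hrf)
      · exact (hEΨ _).2 h0 r (by rw [hRtD p qh]; exact hrf)
    refine ⟨fun n => r (n+1), hbwd, ?_⟩
    have : (fun n => r (n+1)) = z := by
      rw [hzeq]
      rfl
    rw [this]
    exact hzf


/- ============ second diagonalization : ¬ (f ≤ gd) ============ -/

lemma not_wle_f_gd (h f : Problem) (a : ℕ)
    (ha : ∀ p : Baire, ∃ xa, FEval a p xa ∧ xa ∈ dom h) (hfh : ¬ WLE f h) :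
    ¬ WLE f (gd h f (DeadSet h f)) := by
  classical
  rintro ⟨φ, ψ, hred⟩
  set t := 2 * Nat.pair φ ψ + 1 with ht
  have hstep : ∀ st, stepSt h f t st =
      if hm : ∃ pr, M2P h f φ ψ {q | q ∈ st.1} pr then (st.1, hm.choose :: st.2) else st := by
    intro st
    rw [stepSt, if_neg (by omega : ¬ t % 2 = 0)]
    simp only [show t / 2 = Nat.pair φ ψ from by omega, Nat.unpair_pair]
  by_cases hm : ∃ pr, M2P h f φ ψ {q | q ∈ (stagesSt h f t).1} pr
  · -- kill case
    have hprot : hm.choose ∈ (stagesSt h f (t+1)).2 := by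
      show hm.choose ∈ (stepSt h f t (stagesSt h f t)).2
      rw [hstep, dif_pos hm]
      exact List.mem_cons_self
    have halive : hm.choose ∉ DeadSet h f := prot_alive h f hprot
    obtain ⟨hc1, hnd, p0, hp0, X, hXf, hX0, hX2, w, hbad⟩ := hm.choose_spec
    obtain ⟨X', hX'f, hX'dom, hback⟩ := hred p0 hp0
    have hXX : X' = X := FEval_unique hX'f hXf
    have hq : cons 2 (pair w (const hm.choose.2)) ∈ gd h f (DeadSet h f) X := by
      rw [gd_one hX0]
      have hdom' : X ∈ dom (gd h f (DeadSet h f)) := by rw [← hXX]; exact hX'dom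
      obtain ⟨hl, hn⟩ := (dom_gd_one hX0).mp hdom'
      refine ⟨hl, hn, Or.inr ⟨w, hm.choose.2, hc1, ?_, rfl⟩⟩
      show ((tl X) 1, hm.choose.2) ∉ DeadSet h f
      have h12 : (tl X) 1 = X 2 := rfl
      rw [h12, hX2]
      exact halive
    obtain ⟨r, hrf, hrmem⟩ := hback _ (by rw [hXX]; exact hq)
    exact hbad ⟨r, hrf, hrmem⟩
  · -- no kill : build a reduction from f to h
    exfalso
    apply hfh
    set cst := (((stagesSt h f t).1.map Prod.snd).foldr max 0) + 1 with hcst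
    have hc1 : 1 ≤ cst := by omega
    have hfree : ∀ pr ∈ (stagesSt h f t).1, pr.2 ≠ cst := by
      intro pr hpr heq
      have := foldr_max_ge (List.mem_map_of_mem (f := Prod.snd) hpr)
      omega
    obtain ⟨eΦ, hEΦ⟩ := comb2 φ a
    obtain ⟨eΨ, hEΨ⟩ := comb1 ψ ψ
      (fun i => if i % 2 = 0 then Sum.inl i else
        if i = 1 then Sum.inr 2 else
        if (i/2 - 1) % 2 = 0 then Sum.inl (i/2) else Sum.inr cst)
      (fun i => if i % 2 = 0 then Sum.inl i else
        if i = 1 then Sum.inr 2 else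
        if (i/2 - 1) % 2 = 0 then Sum.inl (i/2) else Sum.inr cst)
      (fun n => n) (fun n => n) (fun _ v => v) (fun _ v => v)
      (Primrec.ite (Primrec.eq.comp (Primrec.nat_mod.comp Primrec.id (Primrec.const 2))
          (Primrec.const 0))
        (Primrec.sumInl.comp Primrec.id)
        (Primrec.ite (Primrec.eq.comp Primrec.id (Primrec.const 1))
          (Primrec.const (Sum.inr 2))
          (Primrec.ite (Primrec.eq.comp
              (Primrec.nat_mod.comp
                (Primrec.pred.comp (Primrec.nat_div.comp Primrec.id (Primrec.const 2)))
                (Primrec.const 2)) (Primrec.const 0))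
            (Primrec.sumInl.comp (Primrec.nat_div.comp Primrec.id (Primrec.const 2)))
            (Primrec.const (Sum.inr cst)))))
      (Primrec.ite (Primrec.eq.comp (Primrec.nat_mod.comp Primrec.id (Primrec.const 2))
          (Primrec.const 0))
        (Primrec.sumInl.comp Primrec.id)
        (Primrec.ite (Primrec.eq.comp Primrec.id (Primrec.const 1))
          (Primrec.const (Sum.inr 2))
          (Primrec.ite (Primrec.eq.comp
              (Primrec.nat_mod.comp
                (Primrec.pred.comp (Primrec.nat_div.comp Primrec.id (Primrec.const 2)))
                (Primrec.const 2)) (Primrec.const 0))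
            (Primrec.sumInl.comp (Primrec.nat_div.comp Primrec.id (Primrec.const 2)))
            (Primrec.const (Sum.inr cst)))))
      Primrec.id Primrec.id Primrec₂.right Primrec₂.right
      (fun i j hij => by
        have hij' : (if i % 2 = 0 then Sum.inl i else
            if i = 1 then Sum.inr 2 else
            if (i/2 - 1) % 2 = 0 then Sum.inl (i/2) else Sum.inr cst)
            = (Sum.inl j : ℕ ⊕ ℕ) := hij
        by_cases h1 : i % 2 = 0
        · rw [if_pos h1] at hij'; injection hij' with hh; omega
        · rw [if_neg h1] at hij'
          by_cases h2 : i = 1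
          · rw [if_pos h2] at hij'; exact absurd hij' (by simp)
          · rw [if_neg h2] at hij'
            by_cases h3 : (i/2 - 1) % 2 = 0
            · rw [if_pos h3] at hij'; injection hij' with hh; omega
            · rw [if_neg h3] at hij'; exact absurd hij' (by simp))
      (fun i j hij => by
        have hij' : (if i % 2 = 0 then Sum.inl i else
            if i = 1 then Sum.inr 2 else
            if (i/2 - 1) % 2 = 0 then Sum.inl (i/2) else Sum.inr cst)
            = (Sum.inl j : ℕ ⊕ ℕ) := hij
        by_cases h1 : i % 2 = 0
        · rw [if_pos h1] at hij'; injection hij' with hh; omega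
        · rw [if_neg h1] at hij'
          by_cases h2 : i = 1
          · rw [if_pos h2] at hij'; exact absurd hij' (by simp)
          · rw [if_neg h2] at hij'
            by_cases h3 : (i/2 - 1) % 2 = 0
            · rw [if_pos h3] at hij'; injection hij' with hh; omega
            · rw [if_neg h3] at hij'; exact absurd hij' (by simp))
    have hRtB : ∀ (pp qh : Baire),
        Rt (fun i => if i % 2 = 0 then Sum.inl i else
          if i = 1 then Sum.inr 2 else
          if (i/2 - 1) % 2 = 0 then Sum.inl (i/2) else Sum.inr cst) (pair pp qh)
          = pair pp (cons 2 (pair qh (const cst))) := by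
      intro pp qh
      funext i
      refine parity_cases (fun i =>
        Rt (fun i => if i % 2 = 0 then Sum.inl i else
          if i = 1 then Sum.inr 2 else
          if (i/2 - 1) % 2 = 0 then Sum.inl (i/2) else Sum.inr cst) (pair pp qh) i
          = pair pp (cons 2 (pair qh (const cst))) i) ?_ ?_ i
      · intro m
        show Sum.elim (pair pp qh) id (if (2*m) % 2 = 0 then Sum.inl (2*m) else
          if 2*m = 1 then Sum.inr 2 else
          if ((2*m)/2 - 1) % 2 = 0 then Sum.inl ((2*m)/2) else Sum.inr cst)
          = pair pp (cons 2 (pair qh (const cst))) (2*m)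
        rw [if_pos (by omega)]
        show pair pp qh (2*m) = pair pp (cons 2 (pair qh (const cst))) (2*m)
        rw [pair_even, pair_even]
      · intro m
        show Sum.elim (pair pp qh) id (if (2*m+1) % 2 = 0 then Sum.inl (2*m+1) else
          if 2*m+1 = 1 then Sum.inr 2 else
          if ((2*m+1)/2 - 1) % 2 = 0 then Sum.inl ((2*m+1)/2) else Sum.inr cst)
          = pair pp (cons 2 (pair qh (const cst))) (2*m+1)
        rw [if_neg (by omega)]
        rw [show pair pp (cons 2 (pair qh (const cst))) (2*m+1)
          = cons 2 (pair qh (const cst)) m from by rw [pair_odd]]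
        cases m with
        | zero => rw [if_pos rfl]; rfl
        | succ mm =>
          rw [if_neg (by omega)]
          have hq2 : (2*(mm+1)+1)/2 - 1 = mm := by omega
          have hq3 : (2*(mm+1)+1)/2 = mm + 1 := by omega
          rw [hq2, hq3]
          show Sum.elim (pair pp qh) id (if mm % 2 = 0 then Sum.inl (mm+1) else Sum.inr cst)
            = pair qh (const cst) mm
          refine parity_cases (fun mm => Sum.elim (pair pp qh) id
            (if mm % 2 = 0 then Sum.inl (mm+1) else Sum.inr cst)
            = pair qh (const cst) mm) ?_ ?_ mm
          · intro jj
            rw [if_pos (by omega), pair_even]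
            show pair pp qh (2*jj+1) = qh jj
            rw [pair_odd]
          · intro jj
            rw [if_neg (by omega), pair_odd]
            rfl
    refine ⟨eΦ, eΨ, fun p hp => ?_⟩
    obtain ⟨X, hXf, hXdom, hback⟩ := hred p hp
    obtain ⟨A, hAf, hAdom⟩ := ha p
    have hfwd := hEΦ p X A hXf hAf
    have hbwdgen : ∀ (qh r : Baire), FEval ψ (pair p (cons 2 (pair qh (const cst)))) r →
        FEval eΨ (pair p qh) r := by
      intro qh r hr
      rcases eq_or_ne ((pair p qh) 0) 0 with h0 | h0
      · exact (hEΨ _).1 h0 r (by rw [hRtB p qh]; exact hr)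
      · exact (hEΨ _).2 h0 r (by rw [hRtB p qh]; exact hr)
    have hX01 : X 0 = 0 ∨ X 0 = 1 := by
      by_contra hno
      push_neg at hno
      obtain ⟨z, hz⟩ := hXdom
      rw [gd_other hno.1 hno.2] at hz
      exact hz
    rcases hX01 with h0 | h1
    · have htlX : (fun n => if X 0 = 0 then X (n+1) else A n) = tl X := by
        funext n
        rw [if_pos h0]
        rfl
      refine ⟨tl X, by rw [← htlX]; exact hfwd, (dom_gd_zero h0).mp hXdom, ?_⟩
      intro qh hqh
      have hsynth : cons 2 (pair qh (const cst)) ∈ gd h f (DeadSet h f) X := by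
        rw [gd_zero h0]
        exact ⟨qh, hqh, cst, rfl⟩
      obtain ⟨r, hrf, hrmem⟩ := hback _ hsynth
      exact ⟨r, hbwdgen qh r hrf, hrmem⟩
    · refine ⟨A, ?_, hAdom, ?_⟩
      · have hAeq : (fun n => if X 0 = 0 then X (n+1) else A n) = A := by
          funext n
          rw [if_neg (by omega)]
        rw [← hAeq]
        exact hfwd
      · intro qh hqh
        have hhandle : ∃ r, FEval ψ (pair p (cons 2 (pair qh (const cst)))) r ∧ r ∈ f p := by
          by_contra hnor
          exact hm ⟨(X 2, cst), hc1, fun hmem => hfree _ hmem rfl, p, hp, X, hXf, h1, rfl,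
            qh, hnor⟩
        obtain ⟨r, hrf, hrmem⟩ := hhandle
        exact ⟨r, hbwdgen qh r hrf, hrmem⟩

end Density





/-- The pointed Weihrauch degrees are dense. -/
theorem pointed_degrees_dense (h f : Problem) (hpt : WLE idB h) (hlt : WLT h f) :
    ∃ g : Problem, WLT h g ∧ WLT g f := by
  obtain ⟨hhf, hfh⟩ := hlt
  obtain ⟨a, b, hab⟩ := hpt
  have ha : ∀ p : Baire, ∃ xa, FEval a p xa ∧ xa ∈ dom h := by
    intro p
    obtain ⟨xa, hxa, hdom, -⟩ := hab p ⟨p, rfl⟩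
    exact ⟨xa, hxa, hdom⟩
  exact ⟨gd h f (DeadSet h f),
    ⟨wle_h_gd h f _, not_wle_gd_h h f hfh⟩,
    ⟨wle_gd_f h f _ hhf, not_wle_f_gd h f a ha hfh⟩⟩

end WeihrauchPaper
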